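/- Let M be a unitary projective co-representation of G of dimension n. Then there exists a Hermitian n×n matrix X such that, setting ℋ = Σ_{g∈G} M(g)·(X + X†)^{σ(g)}·M(g)†, the eigenspaces of ℋ are pairwise orthogonal invariant subspaces whose direct sum is ℂⁿ, and the restriction of the operators ρ(g) to each eigenspace of ℋ defines an irreducible projective co-representation; i.e., the eigenspace decomposition of ℋ realizes a complete decomposition of M into irreducible components. -/

import Mathlib

open Matrix Complex BigOperators

noncomputable section

def mconj {ι : Type*} (u : ℤˣ) (X : Matrix ι ι ℂ) : Matrix ι ι ℂ :=
  if u = 1 then X else X.map (starRingEnd ℂ)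

def vconj {ι : Type*} (u : ℤˣ) (v : ι → ℂ) : ι → ℂ :=
  if u = 1 then v else star v

structure IsCoRep {G : Type*} [Group G] {ι : Type*} [Fintype ι] [DecidableEq ι] (s : G →* ℤˣ)
    (M : G → Matrix ι ι ℂ) (ω : G → G → ℂ) : Prop where
  isUnit : ∀ g, IsUnit (M g)
  omega_norm : ∀ g1 g2, ‖ω g1 g2‖ = 1
  mul_eq : ∀ g1 g2, M g1 * mconj (s g1) (M g2) = ω g1 g2 • M (g1 * g2)

structure IsUnitaryCoRep {G : Type*} [Group G] {ι : Type*} [Fintype ι] [DecidableEq ι]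
    (s : G →* ℤˣ) (M : G → Matrix ι ι ℂ) (ω : G → G → ℂ) extends IsCoRep s M ω : Prop where
  unitary : ∀ g, M g ∈ Matrix.unitaryGroup ι ℂ

def rho {G : Type*} [Group G] {ι : Type*} [Fintype ι] (s : G →* ℤˣ) (M : G → Matrix ι ι ℂ)
    (g : G) (v : ι → ℂ) : ι → ℂ :=
  (M g).mulVec (vconj (s g) v)

def InvariantSub {G : Type*} [Group G] {ι : Type*} [Fintype ι] (s : G →* ℤˣ)
    (M : G → Matrix ι ι ℂ) (W : Submodule ℂ (ι → ℂ)) : Prop :=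
  ∀ g : G, ∀ v ∈ W, rho s M g v ∈ W

/-- The eigenspace `ker(Q - λI)` of a matrix `Q`, as a submodule of `ι → ℂ`. -/
def eigSpace {ι : Type*} [Fintype ι] (Q : Matrix ι ι ℂ) (lam : ℂ) :
    Submodule ℂ (ι → ℂ) where
  carrier := {v | Q.mulVec v = lam • v}
  add_mem' := by
    intro a b ha hb
    simp only [Set.mem_setOf_eq] at *
    simp [Matrix.mulVec_add, ha, hb, smul_add]
  zero_mem' := by simp [Matrix.mulVec_zero]
  smul_mem' := by
    intro c v hv
    simp only [Set.mem_setOf_eq] at *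
    rw [Matrix.mulVec_smul, hv, smul_comm]

/-!
Every `ρ(g)` is unitary or antiunitary and `ρ(g) ρ(g⁻¹)` is a nonzero scalar, so the orthogonal
complement of an invariant subspace is again invariant. Hence `ℂⁿ` is an orthogonal sum of
irreducible invariant subspaces `W₀, …, W_{k-1}`. With `P_i` the orthogonal projection onto `W_i`,
the Hermitian matrix `H₀ = ∑ i • P_i` has exactly the `W_i` as its nonzero eigenspaces, and it
commutes with every `ρ(g)` because `ρ(g)` preserves `W_i` and `W_iᗮ`. In matrix form this says
`M(g) · H₀^{σ(g)} · M(g)† = H₀`, so `X = H₀ / (2|G|)` gives `ℋ = H₀`.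
-/

theorem Module.End.eigenspace_eq_bot_or_exists_eq {K V ι : Type*} [Field K] [AddCommGroup V]
    [Module K V] (f : Module.End K V) {W : ι → Submodule K V} {c : ι → K}
    (hc : Function.Injective c) (hW : ∀ i, W i ≤ f.eigenspace (c i)) (htop : ⨆ i, W i = ⊤)
    (μ : K) : f.eigenspace μ = ⊥ ∨ ∃ i, f.eigenspace μ = W i := by
  have hdisj := f.eigenspaces_iSupIndep μ
  by_cases hμ : ∃ i, c i = μ
  · obtain ⟨j, rfl⟩ := hμ
    refine Or.inr ⟨j, ?_⟩
    have hrest : ⨆ (i) (_ : i ≠ j), W i ≤ ⨆ (ν) (_ : ν ≠ c j), f.eigenspace ν :=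
      iSup₂_le fun i hi => (hW i).trans <|
        le_iSup₂ (f := fun ν (_ : ν ≠ c j) => f.eigenspace ν) (c i) (hc.ne hi)
    calc f.eigenspace (c j) = (W j ⊔ ⨆ (i) (_ : i ≠ j), W i) ⊓ f.eigenspace (c j) := by
          rw [← iSup_split_single, htop, top_inf_eq]
      _ = W j := by
          rw [sup_inf_assoc_of_le _ (hW j), (hdisj.symm.mono_left hrest).eq_bot, sup_bot_eq]
  · refine Or.inl (hdisj.eq_bot_of_le ?_)
    calc f.eigenspace μ ≤ ⨆ i, W i := htop ▸ le_top
      _ ≤ _ := iSup_le fun i => (hW i).trans <|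
        le_iSup₂ (f := fun ν (_ : ν ≠ μ) => f.eigenspace ν) (c i) fun h => hμ ⟨i, h⟩

section InnerProductSpace

variable {𝕜 E : Type*} [RCLike 𝕜] [NormedAddCommGroup E] [InnerProductSpace 𝕜 E]

theorem Submodule.exists_finset_minimal_pairwise_isOrtho [FiniteDimensional 𝕜 E]
    {p : Submodule 𝕜 E → Prop} (hinf : ∀ U V, p U → p V → p (U ⊓ V))
    (horth : ∀ V, p V → p Vᗮ) (U : Submodule 𝕜 E) (hU : p U) :
    ∃ S : Finset (Submodule 𝕜 E), (∀ W ∈ S, Minimal (fun V => p V ∧ V ≠ ⊥) W) ∧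
      (S : Set (Submodule 𝕜 E)).Pairwise (· ⟂ ·) ∧ sSup (S : Set (Submodule 𝕜 E)) = U := by
  classical
  induction hd : Module.finrank 𝕜 U using Nat.strong_induction_on generalizing U with
  | _ d ih =>
  by_cases hbot : U = ⊥
  · exact ⟨∅, by simp, by simp, by simp [hbot]⟩
  obtain ⟨V, hVU, hV⟩ := exists_minimal_le_of_wellFoundedLT (fun V => p V ∧ V ≠ ⊥) U ⟨hU, hbot⟩
  have hVpos : 0 < Module.finrank 𝕜 V :=
    Nat.pos_of_ne_zero fun h => hV.prop.2 (Submodule.finrank_eq_zero.mp h)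
  have hrank := Submodule.finrank_add_inf_finrank_orthogonal hVU
  obtain ⟨S, hSmin, hSorth, hSsup⟩ :=
    ih _ (by omega) (Vᗮ ⊓ U) (hinf _ _ (horth V hV.prop.1) hU) rfl
  have hSV : ∀ W ∈ (S : Set (Submodule 𝕜 E)), V ⟂ W := fun W hW =>
    (Submodule.isOrtho_iff_le.mpr ((le_sSup hW).trans (hSsup ▸ inf_le_left))).symm
  refine ⟨insert V S, ?_, ?_, ?_⟩
  · exact Finset.forall_mem_insert _ _ _ |>.mpr ⟨hV, hSmin⟩
  · rw [Finset.coe_insert, Set.pairwise_insert_of_symm]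
    exact ⟨hSorth, fun W hW _ => hSV W hW⟩
  · rw [Finset.coe_insert, sSup_insert, hSsup,
      Submodule.sup_orthogonal_inf_of_hasOrthogonalProjection hVU]

theorem Submodule.sum_smul_starProjection_apply_of_mem {ι : Type*} [Fintype ι]
    {W : ι → Submodule 𝕜 E} [∀ i, (W i).HasOrthogonalProjection]
    (hW : Pairwise fun i j => W i ⟂ W j) (c : ι → 𝕜) {j : ι} {x : E} (hx : x ∈ W j) :
    (∑ i, c i • ((W i).starProjection : E →ₗ[𝕜] E)) x = c j • x := by
  classical
  rw [LinearMap.sum_apply, Finset.sum_eq_single j]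
  · rw [LinearMap.smul_apply, ContinuousLinearMap.coe_coe,
      Submodule.starProjection_eq_self_iff.mpr hx]
  · intro i _ hij
    rw [LinearMap.smul_apply, ContinuousLinearMap.coe_coe,
      (Submodule.starProjection_apply_eq_zero_iff _).mpr ((hW hij.symm).le hx), smul_zero]
  · simp

theorem Submodule.map_starProjection_of_mapsTo (K : Submodule 𝕜 E) [K.HasOrthogonalProjection]
    (f : E →+ E) (hK : Set.MapsTo f K K) (hKo : Set.MapsTo f Kᗮ Kᗮ) (x : E) :
    f (K.starProjection x) = K.starProjection (f x) := by
  have hx : f x = f (K.starProjection x) + f (x - K.starProjection x) := by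
    rw [← map_add, add_sub_cancel]
  rw [hx, map_add, Submodule.starProjection_eq_self_iff.mpr (hK (K.starProjection_apply_mem x)),
    (Submodule.starProjection_apply_eq_zero_iff _).mpr
      (hKo (K.sub_starProjection_mem_orthogonal x)), add_zero]

theorem exists_isSymmetric_commute_eigenspace_minimal [FiniteDimensional 𝕜 E] {G : Type*}
    (f : G → E →+ E)
    (horth : ∀ V : Submodule 𝕜 E, (∀ g, Set.MapsTo (f g) V V) → ∀ g, Set.MapsTo (f g) Vᗮ Vᗮ) :
    ∃ T : E →ₗ[𝕜] E, T.IsSymmetric ∧ (∀ g x, f g (T x) = T (f g x)) ∧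
      (⨆ μ, Module.End.eigenspace T μ) = ⊤ ∧
      ∀ μ, Module.End.eigenspace T μ = ⊥ ∨
        Minimal (fun V : Submodule 𝕜 E => (∀ g, Set.MapsTo (f g) V V) ∧ V ≠ ⊥)
          (Module.End.eigenspace T μ) := by
  classical
  obtain ⟨S, hmin, horthS, hsup⟩ := Submodule.exists_finset_minimal_pairwise_isOrtho
    (p := fun V : Submodule 𝕜 E => ∀ g, Set.MapsTo (f g) V V)
    (fun U V hU hV g x hx => ⟨hU g hx.1, hV g hx.2⟩) horth ⊤ fun g x _ => Submodule.mem_top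
  have hpair : Pairwise fun V W : S => (V : Submodule 𝕜 E) ⟂ W :=
    (pairwise_subtype_iff_pairwise_set _ _).mpr horthS
  -- the eigenvalues `0, 1, 2, …` are natural numbers, so additivity of `f g` suffices below
  let k : S → ℕ := fun W => S.equivFin W
  have hk : Function.Injective fun W => (k W : 𝕜) :=
    (Nat.cast_injective.comp Fin.val_injective).comp S.equivFin.injective
  let T : E →ₗ[𝕜] E := ∑ W : S, (k W : 𝕜) • ((W : Submodule 𝕜 E).starProjection : E →ₗ[𝕜] E)
  have hWT : ∀ W : S, (W : Submodule 𝕜 E) ≤ Module.End.eigenspace T (k W) :=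
    fun W x hx => Module.End.mem_eigenspace_iff.mpr
      (Submodule.sum_smul_starProjection_apply_of_mem hpair _ hx)
  have htop : ⨆ W : S, (W : Submodule 𝕜 E) = ⊤ := (sSup_eq_iSup' _).symm.trans hsup
  refine ⟨T, ?_, ?_, ?_, fun μ => ?_⟩
  · exact LinearMap.isSymmetric_sum _ fun W _ =>
      (Submodule.starProjection_isSymmetric _).smul (by simp)
  · intro g x
    simp only [T, LinearMap.sum_apply, LinearMap.smul_apply, ContinuousLinearMap.coe_coe,
      map_sum, Nat.cast_smul_eq_nsmul, map_nsmul]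
    refine Finset.sum_congr rfl fun W _ => congrArg _ ?_
    exact Submodule.map_starProjection_of_mapsTo _ _ ((hmin W W.2).prop.1 g)
      (horth _ (hmin W W.2).prop.1 g) x
  · exact eq_top_iff.mpr (htop ▸ iSup_mono' fun W => ⟨_, hWT W⟩)
  · rcases Module.End.eigenspace_eq_bot_or_exists_eq _ hk hWT htop μ with h | ⟨W, h⟩
    · exact Or.inl h
    · exact Or.inr (h ▸ hmin W W.2)

end InnerProductSpace

section CoRepresentation

variable {ι : Type*}

theorem vconj_add (u : ℤˣ) (v w : ι → ℂ) : vconj u (v + w) = vconj u v + vconj u w := by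
  unfold vconj; split_ifs <;> simp

theorem vconj_zero (u : ℤˣ) : vconj u (0 : ι → ℂ) = 0 := by
  unfold vconj; split_ifs <;> simp

theorem vconj_vconj (u₁ u₂ : ℤˣ) (v : ι → ℂ) : vconj u₁ (vconj u₂ v) = vconj (u₁ * u₂) v := by
  rcases Int.units_eq_one_or u₁ with rfl | rfl <;>
    rcases Int.units_eq_one_or u₂ with rfl | rfl <;> simp [vconj]

theorem vconj_vconj_self (u : ℤˣ) (v : ι → ℂ) : vconj u (vconj u v) = v := by
  rw [vconj_vconj, Int.units_mul_self, vconj, if_pos rfl]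

theorem mconj_real_smul (u : ℤˣ) (r : ℝ) (A : Matrix ι ι ℂ) :
    mconj u (r • A) = r • mconj u A := by
  unfold mconj; split_ifs
  · rfl
  · ext i j; simp

variable [Fintype ι]

theorem vconj_mulVec (u : ℤˣ) (A : Matrix ι ι ℂ) (v : ι → ℂ) :
    vconj u (A *ᵥ v) = mconj u A *ᵥ vconj u v := by
  unfold vconj mconj; split_ifs
  · rfl
  · ext i; simp [mulVec, dotProduct]

theorem vconj_dotProduct_star_vconj (u : ℤˣ) (v w : ι → ℂ) :
    vconj u w ⬝ᵥ star (vconj u v) = if u = 1 then w ⬝ᵥ star v else star (w ⬝ᵥ star v) := by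
  unfold vconj; split_ifs
  · rfl
  · rw [star_star, Matrix.star_dotProduct, dotProduct_comm (star v)]

variable {G : Type*} [Group G] {s : G →* ℤˣ} {M : G → Matrix ι ι ℂ} {ω : G → G → ℂ}

theorem rho_add (g : G) (v w : ι → ℂ) : rho s M g (v + w) = rho s M g v + rho s M g w := by
  rw [rho, vconj_add, mulVec_add]; rfl

theorem rho_zero (g : G) : rho s M g 0 = 0 := by
  rw [rho, vconj_zero, mulVec_zero]

theorem sum_mul_mconj_real_smul_mul_conjTranspose [Fintype G] {A : Matrix ι ι ℂ}
    (hA : ∀ g, M g * mconj (s g) A * (M g)ᴴ = A) (r : ℝ) :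
    ∑ g, M g * mconj (s g) (r • A) * (M g)ᴴ = (Fintype.card G * r) • A := by
  simp only [mconj_real_smul, Matrix.mul_smul, Matrix.smul_mul, hA, Finset.sum_const,
    Finset.card_univ]
  rw [← Nat.cast_smul_eq_nsmul ℝ, smul_smul]

variable [DecidableEq ι]

theorem IsCoRep.rho_rho (hM : IsCoRep s M ω) (g h : G) (v : ι → ℂ) :
    rho s M g (rho s M h v) = ω g h • rho s M (g * h) v := by
  rw [rho, rho, vconj_mulVec, mulVec_mulVec, vconj_vconj, hM.mul_eq, ← map_mul, smul_mulVec,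
    rho]

theorem IsCoRep.rho_one (hM : IsCoRep s M ω) (v : ι → ℂ) : rho s M 1 v = ω 1 1 • v := by
  have hM1 : M 1 = ω 1 1 • 1 := (hM.isUnit 1).mul_left_cancel <| by
    simpa [mconj] using hM.mul_eq 1 1
  rw [rho, map_one, hM1, smul_mulVec, one_mulVec, vconj, if_pos rfl]

theorem rho_dotProduct_star_rho {g : G} (hMg : M g ∈ unitaryGroup ι ℂ) (v w : ι → ℂ) :
    rho s M g w ⬝ᵥ star (rho s M g v) = vconj (s g) w ⬝ᵥ star (vconj (s g) v) := by
  rw [rho, rho, star_mulVec, dotProduct_comm, ← dotProduct_mulVec, mulVec_mulVec,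
    ← star_eq_conjTranspose, mem_unitaryGroup_iff'.mp hMg, one_mulVec, dotProduct_comm]

theorem mul_mconj_mul_conjTranspose_eq {g : G} (hMg : M g ∈ unitaryGroup ι ℂ)
    {A : Matrix ι ι ℂ} (hA : ∀ v, rho s M g (A *ᵥ v) = A *ᵥ rho s M g v) :
    M g * mconj (s g) A * (M g)ᴴ = A := by
  have hcomm : M g * mconj (s g) A = A * M g := by
    refine ext_iff_mulVec.mpr fun v => ?_
    have := hA (vconj (s g) v)
    rw [rho, rho, vconj_mulVec, vconj_vconj_self] at this
    rwa [← mulVec_mulVec, ← mulVec_mulVec]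
  rw [hcomm, Matrix.mul_assoc, ← star_eq_conjTranspose, mem_unitaryGroup_iff.mp hMg, mul_one]

end CoRepresentation

section Euclidean

variable {ι : Type*} [Fintype ι]
  {G : Type*} [Group G] {s : G →* ℤˣ} {M : G → Matrix ι ι ℂ} {ω : G → G → ℂ}

variable (s M) in
def euclideanRho (g : G) : EuclideanSpace ℂ ι →+ EuclideanSpace ℂ ι where
  toFun x := WithLp.toLp 2 (rho s M g x.ofLp)
  map_zero' := by simp [rho_zero]
  map_add' x y := by simp [rho_add]

theorem invariantSub_map_iff {V : Submodule ℂ (EuclideanSpace ℂ ι)} :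
    InvariantSub s M (V.map (WithLp.linearEquiv 2 ℂ (ι → ℂ)).toLinearMap) ↔
      ∀ g, Set.MapsTo (euclideanRho s M g) V V := by
  simp only [InvariantSub, Set.MapsTo, Submodule.mem_map_equiv]
  exact ⟨fun h g x hx => h g x.ofLp hx, fun h g v hv => h g hv⟩

theorem invariantSub_map_of_eq_bot_or_minimal {V : Submodule ℂ (EuclideanSpace ℂ ι)}
    (hV : V = ⊥ ∨ Minimal (fun V : Submodule ℂ (EuclideanSpace ℂ ι) =>
      (∀ g, Set.MapsTo (euclideanRho s M g) V V) ∧ V ≠ ⊥) V) :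
    InvariantSub s M (V.map (WithLp.linearEquiv 2 ℂ (ι → ℂ)).toLinearMap) ∧
      ∀ W ≤ V.map (WithLp.linearEquiv 2 ℂ (ι → ℂ)).toLinearMap, InvariantSub s M W →
        W = ⊥ ∨ W = V.map (WithLp.linearEquiv 2 ℂ (ι → ℂ)).toLinearMap := by
  rcases hV with rfl | hV
  · rw [Submodule.map_bot]
    refine ⟨fun g v hv => ?_, fun W hW _ => Or.inl (le_bot_iff.mp hW)⟩
    rw [(Submodule.mem_bot ℂ).mp hv, rho_zero]
    exact zero_mem _
  · refine ⟨invariantSub_map_iff.mpr hV.prop.1, fun W hW hWinv => ?_⟩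
    let φ := Submodule.orderIsoMapComap (WithLp.linearEquiv 2 ℂ (ι → ℂ))
    obtain ⟨U, rfl⟩ := φ.surjective W
    replace hW : U ≤ V := φ.le_iff_le.mp hW
    by_cases hU : U = ⊥
    · exact Or.inl (hU ▸ φ.map_bot)
    · exact Or.inr (congrArg φ (le_antisymm hW (hV.2 ⟨invariantSub_map_iff.mp hWinv, hU⟩ hW)))

variable [DecidableEq ι]

theorem mem_eigSpace_iff_toLp_mem_eigenspace {A : Matrix ι ι ℂ} {μ : ℂ} {v : ι → ℂ} :
    v ∈ eigSpace A μ ↔ WithLp.toLp 2 v ∈ Module.End.eigenspace (toEuclideanLin A) μ := by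
  rw [Module.End.mem_eigenspace_iff, ← coe_toEuclideanCLM_eq_toEuclideanLin,
    ContinuousLinearMap.coe_coe, toEuclideanCLM_toLp, ← WithLp.toLp_smul,
    (WithLp.toLp_injective 2).eq_iff]
  rfl

theorem eigSpace_eq_map (A : Matrix ι ι ℂ) (μ : ℂ) :
    eigSpace A μ =
      (Module.End.eigenspace (toEuclideanLin A) μ).map
        (WithLp.linearEquiv 2 ℂ (ι → ℂ)).toLinearMap := by
  ext v
  rw [Submodule.mem_map_equiv, mem_eigSpace_iff_toLp_mem_eigenspace]
  rfl

theorem Matrix.IsHermitian.star_dotProduct_eq_zero_of_mem_eigSpace {A : Matrix ι ι ℂ}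
    (hA : A.IsHermitian) {μ ν : ℂ} (hμν : μ ≠ ν) {v w : ι → ℂ} (hv : v ∈ eigSpace A μ)
    (hw : w ∈ eigSpace A ν) : star v ⬝ᵥ w = 0 := by
  have := (isSymmetric_toEuclideanLin_iff.mpr hA).orthogonalFamily_eigenspaces hμν
    ⟨_, mem_eigSpace_iff_toLp_mem_eigenspace.mp hv⟩
    ⟨_, mem_eigSpace_iff_toLp_mem_eigenspace.mp hw⟩
  simpa [EuclideanSpace.inner_toLp_toLp, dotProduct_comm] using this

theorem inner_euclideanRho_eq_zero {g : G} (hMg : M g ∈ unitaryGroup ι ℂ)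
    {x y : EuclideanSpace ℂ ι} (h : inner ℂ x y = 0) :
    inner ℂ (euclideanRho s M g x) (euclideanRho s M g y) = 0 := by
  rw [EuclideanSpace.inner_eq_star_dotProduct] at h ⊢
  change rho s M g y.ofLp ⬝ᵥ star (rho s M g x.ofLp) = 0
  rw [rho_dotProduct_star_rho hMg, vconj_dotProduct_star_vconj, h, star_zero, ite_self]

theorem IsUnitaryCoRep.mapsTo_euclideanRho_orthogonal (hM : IsUnitaryCoRep s M ω)
    {V : Submodule ℂ (EuclideanSpace ℂ ι)} (hV : ∀ g, Set.MapsTo (euclideanRho s M g) V V)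
    (g : G) : Set.MapsTo (euclideanRho s M g) Vᗮ Vᗮ := by
  intro x hx
  rw [SetLike.mem_coe, Submodule.mem_orthogonal] at hx ⊢
  intro y hy
  have hω : ∀ g h, ω g h ≠ 0 := fun g h => norm_ne_zero_iff.mp (by simp [hM.omega_norm])
  have hgy : euclideanRho s M g (euclideanRho s M g⁻¹ y) = (ω g g⁻¹ * ω 1 1) • y := by
    change WithLp.toLp 2 (rho s M g (rho s M g⁻¹ y.ofLp)) = _
    rw [hM.rho_rho, mul_inv_cancel, hM.rho_one, smul_smul]
    rfl
  have h0 := inner_euclideanRho_eq_zero (s := s) (hM.unitary g) (hx _ (hV g⁻¹ hy))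
  rw [hgy, inner_smul_left, mul_eq_zero] at h0
  exact h0.resolve_left (by simpa using mul_ne_zero (hω g g⁻¹) (hω 1 1))

theorem IsUnitaryCoRep.exists_isHermitian_eigSpace_irreducible (hM : IsUnitaryCoRep s M ω) :
    ∃ H : Matrix ι ι ℂ, H.IsHermitian ∧ (∀ g, M g * mconj (s g) H * (M g)ᴴ = H) ∧
      (⨆ μ, eigSpace H μ) = ⊤ ∧ ∀ μ, InvariantSub s M (eigSpace H μ) ∧
        ∀ W ≤ eigSpace H μ, InvariantSub s M W → W = ⊥ ∨ W = eigSpace H μ := by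
  obtain ⟨T, hT, hcomm, hsup, hmin⟩ := exists_isSymmetric_commute_eigenspace_minimal
    (euclideanRho s M) fun V hV => hM.mapsTo_euclideanRho_orthogonal hV
  set H := toEuclideanLin.symm T
  have hHT : toEuclideanLin H = T := LinearEquiv.apply_symm_apply _ _
  have heig : ∀ μ, eigSpace H μ =
      (Module.End.eigenspace T μ).map (WithLp.linearEquiv 2 ℂ (ι → ℂ)).toLinearMap :=
    fun μ => hHT ▸ eigSpace_eq_map H μ
  refine ⟨H, isSymmetric_toEuclideanLin_iff.mp (hHT ▸ hT),
    fun g => mul_mconj_mul_conjTranspose_eq (hM.unitary g) fun v => ?_, ?_,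
    fun μ => heig μ ▸ invariantSub_map_of_eq_bot_or_minimal (hmin μ)⟩
  · have := hcomm g (WithLp.toLp 2 v)
    rw [← hHT] at this
    simpa [euclideanRho, ← coe_toEuclideanCLM_eq_toEuclideanLin] using this
  · simp_rw [heig, ← Submodule.map_iSup, hsup, Submodule.map_top, LinearEquiv.range]

end Euclidean

theorem hamiltonian_complete_decomposition_general {G : Type*} [Group G] [Fintype G]
    (s : G →* ℤˣ)
    {n : ℕ}
    (M : G → Matrix (Fin n) (Fin n) ℂ) (ω : G → G → ℂ)
    (hM : IsUnitaryCoRep s M ω) :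
    ∃ X : Matrix (Fin n) (Fin n) ℂ, X.IsHermitian ∧
      ∀ H : Matrix (Fin n) (Fin n) ℂ,
        H = ∑ g : G, M g * mconj (s g) (X + Xᴴ) * (M g)ᴴ →
        (∀ lam mu : ℂ, lam ≠ mu → ∀ v ∈ eigSpace H lam, ∀ w ∈ eigSpace H mu,
          dotProduct (star v) w = 0) ∧
        (⨆ lam : ℂ, eigSpace H lam) = ⊤ ∧
        (∀ lam : ℂ, InvariantSub s M (eigSpace H lam)) ∧
        (∀ lam : ℂ, ∀ W : Submodule ℂ (Fin n → ℂ), W ≤ eigSpace H lam →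
          InvariantSub s M W → W = ⊥ ∨ W = eigSpace H lam) := by
  obtain ⟨H₀, hH₀, hinv, hsup, hirr⟩ := hM.exists_isHermitian_eigSpace_irreducible
  set r : ℝ := (2 * Fintype.card G : ℝ)⁻¹
  have hX : (r • H₀).IsHermitian := IsSelfAdjoint.smul (IsSelfAdjoint.all r) hH₀
  refine ⟨r • H₀, hX, fun H hH => ?_⟩
  obtain rfl : H = H₀ := by
    rw [hH, hX.eq, ← two_smul ℝ, smul_smul, sum_mul_mconj_real_smul_mul_conjTranspose hinv,
      ← mul_assoc, mul_comm _ (2 : ℝ), mul_inv_cancel₀ (by positivity), one_smul]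
  exact ⟨fun _ _ hne _ hv _ hw => hH₀.star_dotProduct_eq_zero_of_mem_eigSpace hne hv hw, hsup,
    fun μ => (hirr μ).1, fun μ => (hirr μ).2⟩

/-- there exists a Hermitian `X` such that the eigenspace decomposition of
`ℋ = Σ_g M(g)·(X+X†)^{σ(g)}·M(g)†` is an orthogonal decomposition of `ℂⁿ` into invariant
subspaces on each of which the co-representation is irreducible. -/
theorem hamiltonian_complete_decomposition {G : Type*} [Group G] [Fintype G]
    (s : G →* ℤˣ) (hs : Function.Surjective s)
    {n : ℕ}
    (M : G → Matrix (Fin n) (Fin n) ℂ) (ω : G → G → ℂ)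
    (hM : IsUnitaryCoRep s M ω) :
    ∃ X : Matrix (Fin n) (Fin n) ℂ, X.IsHermitian ∧
      ∀ H : Matrix (Fin n) (Fin n) ℂ,
        H = ∑ g : G, M g * mconj (s g) (X + Xᴴ) * (M g)ᴴ →
        (∀ lam mu : ℂ, lam ≠ mu → ∀ v ∈ eigSpace H lam, ∀ w ∈ eigSpace H mu,
          dotProduct (star v) w = 0) ∧
        (⨆ lam : ℂ, eigSpace H lam) = ⊤ ∧
        (∀ lam : ℂ, InvariantSub s M (eigSpace H lam)) ∧
        (∀ lam : ℂ, ∀ W : Submodule ℂ (Fin n → ℂ), W ≤ eigSpace H lam →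
          InvariantSub s M W → W = ⊥ ∨ W = eigSpace H lam) :=
  hamiltonian_complete_decomposition_general s M ω hM

end
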